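/- arXiv:2006.12193 — 2 statements merged into one kernel-verified Lean document; each statement's English description precedes it below -/
import Mathlib

section
/- Let $K$ be a commutative $\mathbb{Q}$-algebra. For each $n \ge 0$, write $\lg_n(x) = \frac{1}{n!}(\log(1-x))^n \in K[[x]]$. Define a composition product $\circ$ on $K[[x]]$ by $H \circ H' = a_0 H(0) + \sum_{i \ge 1} (-1)^i a_i (\partial^{i-1} H)(x, x, \dots, x)$ where $H' = \sum_{i \ge 0} a_i x^i$ and $\partial$ is the partial derivative with respect to the multiplicative formal group law $x * y = x + y - xy$. Then the power series $\lg_n(x)$ are orthogonal idempotents: $\lg_n \circ \lg_m = \delta_{n,m} \lg_n$, and moreover $1 - x = \sum_{r \ge 0} \lg_r(x)$. -/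
variable {K : Type*} [CommRing K] [Algebra ℚ K]

/-- Substitution of a multivariate power series with vanishing constant term into a
one-variable power series. -/
noncomputable def psubst {σ : Type*} (f : MvPowerSeries σ K) (G : PowerSeries K) :
    MvPowerSeries σ K :=
  fun d => ∑ n ∈ Finset.range ((d.sum fun _ e => e) + 1),
    PowerSeries.coeff n G * MvPowerSeries.coeff d (f ^ n)

/-- The iterated partial derivative `∂^{m-1} G` (with respect to the multiplicative formal
group law `x * y = x + y - xy`) of a one-variable power series, a power series in `m`
variables:  `(∂^{m-1} G)(x₁,…,x_m) = ∑_{I ⊆ {1,…,m}} (-1)^{m - |I|} G(x_I)`, where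
`x_I = 1 - ∏_{i ∈ I} (1 - x_i)` is the `*`-sum of the variables `x_i`, `i ∈ I`. -/
noncomputable def partialDeriv (m : ℕ) (G : PowerSeries K) : MvPowerSeries (Fin m) K :=
  ∑ I : Finset (Fin m),
    ((-1 : ℤ) ^ (m + I.card)) • psubst (1 - ∏ i ∈ I, (1 - MvPowerSeries.X i)) G

/-- The diagonal evaluation `(∂^{i-1} H)(x,…,x)` (all `i` variables set equal to `x`) of the
iterated partial derivative with respect to the multiplicative formal group law; on the
diagonal the `*`-sum of `|I|` copies of `x` is `1 - (1-x)^{|I|}`. -/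
noncomputable def diagPartialDeriv (i : ℕ) (H : PowerSeries K) : PowerSeries K :=
  ∑ I : Finset (Fin i),
    ((-1 : ℤ) ^ (i + I.card)) • psubst (1 - (1 - PowerSeries.X) ^ I.card) H

/-- The composition product `H ∘ H' = a₀ H(0) + ∑_{i≥1} (-1)^i aᵢ (∂^{i-1}H)(x,…,x)` where
`H' = ∑ aᵢ xⁱ`; its `n`-th coefficient involves only the terms with `i ≤ n + 1` since
`(∂^{i-1}H)(x,…,x)` is divisible by `xⁱ`. -/
noncomputable def compose (H H' : PowerSeries K) : PowerSeries K :=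
  PowerSeries.C (PowerSeries.coeff 0 H' * PowerSeries.constantCoeff H)
  + PowerSeries.mk fun n =>
      ∑ i ∈ Finset.range (n + 1),
        ((-1 : ℤ) ^ (i + 1)) •
          (PowerSeries.coeff (i + 1) H'
            * PowerSeries.coeff n (diagPartialDeriv (i + 1) H))

/-- The formal power series `log(1-x) = -∑_{i≥1} xⁱ/i`. -/
noncomputable def logOneSub : PowerSeries K :=
  PowerSeries.mk fun i => if i = 0 then 0 else algebraMap ℚ K (-(1 / (i : ℚ)))

/-- `lg_n(x) = (1/n!) (log(1-x))^n`. -/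
noncomputable def lg (n : ℕ) : PowerSeries K :=
  ((n.factorial : ℚ)⁻¹) • (logOneSub (K := K)) ^ n

/-!
Since `log` turns the multiplicative formal group law into addition, `lg_n` evaluated at the
`*`-sum `1 - (1 - x)^k` of `k` copies of `x` is `k^n lg_n`. Grouping the subsets by size gives
`(∂^{i-1} lg_n)(x,…,x) = Δ^i[k ↦ k^n](0) • lg_n` (an `i`-th forward difference), so
`lg_n ∘ lg_m` is `lg_n` times the scalar
`∑_i (-1)^i a_i Δ^i[k ↦ k^n](0)`, where `lg_m = ∑ a_i x^i`. As
`(1 - e^y)^i = (-1)^i ∑_n Δ^i[k ↦ k^n](0) y^n/n!`, this scalar is `n!` times the `n`-th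
coefficient of `lg_m(1 - e^y) = y^m/m!`, i.e. `δ_{nm}`.
For the partition of unity, `∑ lg_r = exp(log(1 - x))`, and `exp(log(1 - x)) = 1 - x` follows from
`log(1 - (1 - e^y)) = y`, because a series with invertible linear term has a two-sided
compositional inverse.
-/

namespace PowerSeries

open Finset

section CommRing

variable {R : Type*} [CommRing R]

theorem coeff_pow_eq_zero_of_lt {f : R⟦X⟧} (hf : constantCoeff f = 0) {n j : ℕ} (h : n < j) :
    coeff n (f ^ j) = 0 :=
  X_pow_dvd_iff.mp (pow_dvd_pow_of_dvd (X_dvd_iff.mpr hf) j) n h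

theorem coeff_subst_eq_sum_range {f : R⟦X⟧} (hf : constantCoeff f = 0) (G : R⟦X⟧) {n M : ℕ}
    (h : n < M) : coeff n (G.subst f) = ∑ j ∈ range M, coeff j G * coeff n (f ^ j) := by
  rw [coeff_subst' (HasSubst.of_constantCoeff_zero' hf)]
  refine finsum_eq_sum_of_support_subset _ fun j hj => ?_
  by_contra hjM
  rw [coe_range, Set.mem_Iio, not_lt] at hjM
  exact hj (by simp only [coeff_pow_eq_zero_of_lt hf (h.trans_le hjM), smul_zero])

theorem subst_eq_X_of_subst_eq_X {f g : R⟦X⟧} (hf : constantCoeff f = 0)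
    (hf' : IsUnit (coeff 1 f)) (hgf : subst f g = X) : subst g f = X := by
  obtain ⟨Q, hQ, hfQ⟩ : ∃ Q : R⟦X⟧, HasSubst Q ∧ subst Q f = X :=
    ⟨_, .substInvOfIsUnit f hf', subst_substInvOfIsUnit_right f hf hf'⟩
  have hgQ : g = Q := calc
    g = subst (subst Q f) g := by rw [hfQ, X_subst]
    _ = subst Q (subst f g) := (subst_comp_subst_apply (.of_constantCoeff_zero' hf) hQ g).symm
    _ = Q := by rw [hgf, subst_X hQ]
  rwa [hgQ]

end CommRing

open fwdDiff in
theorem coeff_exp_sub_one_pow (A : Type*) [CommRing A] [Algebra ℚ A] (i n : ℕ) :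
    coeff n ((exp A - 1) ^ i) =
      algebraMap ℚ A (1 / n.factorial) * (Δ_[1])^[i] (fun r : A ↦ r ^ n) 0 := by
  rw [sub_eq_add_neg, add_pow, map_sum, fwdDiff_iter_eq_sum_shift, mul_sum]
  refine sum_congr rfl fun m _ => ?_
  have hc : ((-1) ^ (i - m) * (i.choose m : A⟦X⟧)) = C ((-1) ^ (i - m) * (i.choose m : A)) := by
    simp
  rw [exp_pow_eq_rescale_exp, mul_assoc, hc, coeff_mul_C, coeff_rescale, coeff_exp]
  simp only [nsmul_eq_mul, mul_one, zero_add, zsmul_eq_mul, Int.cast_mul, Int.cast_pow,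
    Int.cast_neg, Int.cast_one, Int.cast_natCast]
  ring

end PowerSeries

open PowerSeries Finset fwdDiff

theorem psubst_eq_subst {R : Type*} [CommRing R] {f : R⟦X⟧} (hf : constantCoeff f = 0)
    (G : R⟦X⟧) : psubst f G = G.subst f := by
  ext n
  rw [coeff_subst_eq_sum_range hf G n.lt_succ_self]
  show psubst f G (Finsupp.single () n) = _
  rw [psubst, Finsupp.sum_single_index rfl]
  rfl

theorem constantCoeff_logOneSub : constantCoeff (logOneSub : K⟦X⟧) = 0 := by
  simp [logOneSub, ← coeff_zero_eq_constantCoeff_apply]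

theorem one_sub_X_mul_derivative_logOneSub : (1 - X) * d⁄dX K logOneSub = -1 := by
  have h : d⁄dX K (logOneSub : K⟦X⟧) = -PowerSeries.mk 1 := by
    ext n
    have hn : ((n + 1 : ℕ) : ℚ) ≠ 0 := Nat.cast_ne_zero.mpr n.succ_ne_zero
    rw [coeff_derivative, logOneSub, coeff_mk, if_neg n.succ_ne_zero, map_neg, map_neg, coeff_mk,
      Pi.one_apply, ← Nat.cast_succ, ← map_natCast (algebraMap ℚ K) (n + 1), neg_mul, ← map_mul,
      one_div_mul_cancel hn, map_one]
  rw [h, mul_neg, mul_comm, mk_one_mul_one_sub_eq_one]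

theorem logOneSub_subst_eq {f g : K⟦X⟧} (hf : constantCoeff f = 0) (hg : constantCoeff g = 0)
    (hfg : (1 - f) * d⁄dX K g = -d⁄dX K f) : (logOneSub : K⟦X⟧).subst f = g := by
  have : IsAddTorsionFree K := .of_module_rat K
  have hsf := HasSubst.of_constantCoeff_zero' hf
  have hunit : IsUnit (1 - f) := isUnit_iff_constantCoeff.mpr (by simp [hf])
  have hlog : (1 - f) * (d⁄dX K logOneSub).subst f = -1 := by
    have := congrArg (subst f) (one_sub_X_mul_derivative_logOneSub (K := K))
    rwa [subst_mul hsf, subst_sub hsf, subst_X hsf, ← map_one (C (R := K)), subst_C, map_one,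
      ← map_neg, subst_C, map_neg, map_one] at this
  refine derivative.ext (hunit.mul_left_cancel ?_) ?_
  · rw [derivative_subst hsf, ← mul_assoc, hlog, hfg, neg_one_mul]
  · rw [hg]
    exact constantCoeff_subst_eq_zero hf _ constantCoeff_logOneSub

theorem logOneSub_subst_one_sub_one_sub_X_pow (k : ℕ) :
    (logOneSub : K⟦X⟧).subst (1 - (1 - X) ^ k : K⟦X⟧) = (k : K) • logOneSub := by
  refine logOneSub_subst_eq (by simp) (by simp [constantCoeff_logOneSub]) ?_
  rcases k with _ | k
  · simp
  · have h := one_sub_X_mul_derivative_logOneSub (K := K)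
    rw [sub_sub_cancel, Derivation.map_smul, map_sub, derivative_pow, smul_eq_C_mul, map_natCast]
    simp only [Derivation.map_one_eq_zero, derivative_X, map_sub, Nat.add_sub_cancel,
      Nat.cast_succ]
    linear_combination ((k + 1 : K⟦X⟧) * (1 - X) ^ k) * h

theorem logOneSub_subst_one_sub_exp : (logOneSub : K⟦X⟧).subst (1 - exp K : K⟦X⟧) = X :=
  logOneSub_subst_eq (by simp) constantCoeff_X (by simp [derivative_exp])

theorem exp_subst_logOneSub : (exp K).subst (logOneSub : K⟦X⟧) = 1 - X := by
  have h : subst (logOneSub : K⟦X⟧) (1 - exp K) = X :=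
    subst_eq_X_of_subst_eq_X (by simp) (by simp [coeff_one]) logOneSub_subst_one_sub_exp
  rw [subst_sub (.of_constantCoeff_zero' constantCoeff_logOneSub), ← map_one (C (R := K)),
    subst_C, map_one] at h
  rw [← h, sub_sub_cancel]

theorem lg_subst_one_sub_one_sub_X_pow (k n : ℕ) :
    (lg n : K⟦X⟧).subst (1 - (1 - X) ^ k : K⟦X⟧) = ((k : K) ^ n) • lg n := by
  have hs : HasSubst (1 - (1 - X) ^ k : K⟦X⟧) := .of_constantCoeff_zero' (by simp)
  rw [lg, subst_smul hs, subst_pow hs, logOneSub_subst_one_sub_one_sub_X_pow, smul_pow, smul_comm]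

theorem lg_subst_one_sub_exp (m : ℕ) :
    (lg m : K⟦X⟧).subst (1 - exp K : K⟦X⟧) = ((m.factorial : ℚ)⁻¹) • X ^ m := by
  have hs : HasSubst (1 - exp K : K⟦X⟧) := .of_constantCoeff_zero' (by simp)
  rw [lg, subst_smul hs, subst_pow hs, logOneSub_subst_one_sub_exp]

theorem coeff_lg_of_lt {N n : ℕ} (h : N < n) : coeff N (lg n : K⟦X⟧) = 0 := by
  rw [lg, coeff_smul, coeff_pow_eq_zero_of_lt constantCoeff_logOneSub h, smul_zero]

theorem diagPartialDeriv_lg (i n : ℕ) :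
    diagPartialDeriv i (lg n : K⟦X⟧) = (Δ_[1])^[i] (fun r : K ↦ r ^ n) 0 • lg n := by
  have hterm (k : ℕ) : psubst (1 - (1 - X) ^ k : K⟦X⟧) (lg n) = ((k : K) ^ n) • lg n := by
    rw [psubst_eq_subst (by simp), lg_subst_one_sub_one_sub_X_pow]
  simp_rw [diagPartialDeriv, hterm]
  rw [← powerset_univ,
    sum_powerset_apply_card (fun m => (-1 : ℤ) ^ (i + m) • ((m : K) ^ n • lg n)), card_univ,
    Fintype.card_fin, fwdDiff_iter_eq_sum_shift, sum_smul]
  refine sum_congr rfl fun m hm => ?_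
  have hsign : (-1 : ℤ) ^ (i + m) = (-1) ^ (i - m) := by
    rw [← Nat.sub_add_cancel (mem_range_succ_iff.mp hm), add_assoc, ← two_mul, pow_add, pow_mul]
    simp
  rw [hsign, ← Int.cast_smul_eq_zsmul K, ← Nat.cast_smul_eq_nsmul K, smul_smul, smul_smul,
    zsmul_eq_mul, nsmul_eq_mul]
  congr 1
  push_cast
  ring

theorem sum_neg_one_pow_mul_coeff_lg_mul_fwdDiff (m n M : ℕ) (hM : n < M) :
    ∑ i ∈ range M, (-1) ^ i * coeff i (lg m : K⟦X⟧) * (Δ_[1])^[i] (fun r : K ↦ r ^ n) 0 =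
      if n = m then 1 else 0 := by
  set c : K := algebraMap ℚ K (1 / n.factorial)
  have hc : IsUnit c := (isUnit_iff_ne_zero.mpr (by positivity)).map _
  have h := congrArg (coeff n) (lg_subst_one_sub_exp (K := K) m)
  rw [coeff_subst_eq_sum_range (by simp) _ hM] at h
  refine hc.mul_left_cancel ?_
  calc c * ∑ i ∈ range M, (-1) ^ i * coeff i (lg m : K⟦X⟧) * (Δ_[1])^[i] (fun r : K ↦ r ^ n) 0
      = ∑ i ∈ range M, coeff i (lg m : K⟦X⟧) * coeff n ((1 - exp K) ^ i) := by
        rw [mul_sum]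
        refine sum_congr rfl fun i _ => ?_
        have hsign : (-1 : K⟦X⟧) ^ i = C ((-1) ^ i) := by simp
        rw [← neg_sub, neg_pow (exp K - 1), hsign, coeff_C_mul, coeff_exp_sub_one_pow]
        ring
    _ = coeff n (((m.factorial : ℚ)⁻¹) • X ^ m : K⟦X⟧) := h
    _ = c * if n = m then 1 else 0 := by
        rw [coeff_smul, coeff_X_pow]
        split_ifs with hnm
        · simp [c, hnm, Algebra.smul_def]
        · simp

theorem coeff_compose_lg (n m N : ℕ) :
    coeff N (compose (lg n) (lg m) : K⟦X⟧) =
      (∑ i ∈ range (N + 2), (-1) ^ i * coeff i (lg m : K⟦X⟧) *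
        (Δ_[1])^[i] (fun r : K ↦ r ^ n) 0) * coeff N (lg n : K⟦X⟧) := by
  rw [compose, map_add, coeff_C, coeff_mk, sum_range_succ' _ (N + 1), add_mul, sum_mul, add_comm]
  congr 1
  · refine sum_congr rfl fun i _ => ?_
    rw [diagPartialDeriv_lg, coeff_smul, zsmul_eq_mul, smul_eq_mul]
    push_cast
    ring
  · rcases n with _ | n
    · simp [lg, coeff_one]
    · simp [lg, constantCoeff_logOneSub]

theorem compose_lg (n m : ℕ) :
    compose (lg n) (lg m) = if n = m then (lg n : K⟦X⟧) else 0 := by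
  ext N
  rw [coeff_compose_lg]
  rcases le_or_gt n (N + 1) with h | h
  · rw [sum_neg_one_pow_mul_coeff_lg_mul_fwdDiff m n (N + 2) (by omega)]
    split_ifs <;> simp
  · split_ifs <;> simp [coeff_lg_of_lt (show N < n by omega)]

theorem coeff_one_sub_X_eq_sum_coeff_lg (N : ℕ) :
    coeff N (1 - X : K⟦X⟧) = ∑ r ∈ range (N + 1), coeff N (lg r : K⟦X⟧) := by
  rw [← exp_subst_logOneSub, coeff_subst_eq_sum_range constantCoeff_logOneSub _ N.lt_succ_self]
  refine sum_congr rfl fun r _ => ?_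
  rw [coeff_exp, lg, coeff_smul, Algebra.smul_def, one_div]

/-- The series `lg_n(x)` are orthogonal idempotents for the composition product, and they
partition the identity `1 - x` (an identity of power series, stated coefficientwise:
the `N`-th coefficient of `∑_{r≥0} lg_r` involves only the terms with `r ≤ N`). -/
theorem lg_orthogonal_idempotents :
    (∀ n m : ℕ, compose (lg (K := K) n) (lg (K := K) m)
        = if n = m then lg (K := K) n else 0) ∧
    (∀ N : ℕ, PowerSeries.coeff (R := K) N (1 - PowerSeries.X)
        = ∑ r ∈ Finset.range (N + 1), PowerSeries.coeff N (lg (K := K) r)) :=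
  ⟨compose_lg, coeff_one_sub_X_eq_sum_coeff_lg⟩
end

section
/- Let $K$ be a $\mathbb{Q}$-algebra, $G \in K[[x]]$, and $n \ge 1$. With $\partial$ the partial derivative for the multiplicative formal group law $x*y = x + y - xy$, one has $(\partial^n G)(x_1, \dots, x_{n+1}) = \sum_{k=1}^{\infty} \frac{1}{k!} \, \partial^{n-1}\!\left((1-x)^k \frac{d^k G}{dx^k}\right)(x_1, \dots, x_n) \cdot x_{n+1}^k$. -/
variable {K : Type*} [CommRing K] [Algebra ℚ K]

open PowerSeries

/-!
Write `y = x_{n+1}`. Splitting the subsets of `{1,…,n+1}` according to whether they contain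
`n+1` shows that `∂^n G` is `∂^{n-1}` applied to `G(x * y) - G(x)`. Since `x * y = x + (1 - x) y`,
Taylor's formula with the Hasse derivatives `D_k = (1/k!) d^k/dx^k` gives
`G(x * y) = ∑_k ((1 - x)^k D_k G)(x) y^k`, and the coefficient of `y^k` can be read off.
The coefficient of a monomial of degree `N` in `∂^{m-1} G` only involves the coefficients of `G`
of degree at most `N`, so it suffices to do this for polynomials, where substitution is
evaluation and Taylor's formula is a finite sum.
-/

namespace Polynomial

variable {R A : Type*} [CommRing R] [CommRing A] [Algebra R A]

theorem hasseDeriv_map (k : ℕ) (p : R[X]) :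
    hasseDeriv k (p.map (algebraMap R A)) = (hasseDeriv k p).map (algebraMap R A) := by
  ext n
  simp [hasseDeriv_coeff, coeff_map]

theorem aeval_add_eq_sum_hasseDeriv {p : R[X]} {N : ℕ} (hN : p.natDegree < N) (a b : A) :
    aeval (a + b) p = ∑ k ∈ Finset.range N, aeval a (hasseDeriv k p) * b ^ k := by
  set q := p.map (algebraMap R A)
  have hq : (taylor a q).natDegree < N := by
    rw [natDegree_taylor]
    exact natDegree_map_le.trans_lt hN
  rw [← eval_map_algebraMap, add_comm, ← taylor_eval, eval_eq_sum_range' hq]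
  simp only [taylor_coeff, q, hasseDeriv_map, eval_map_algebraMap]

theorem aeval_one_sub_mul_one_sub_eq_sum_hasseDeriv {p : R[X]} {N : ℕ} (hN : p.natDegree < N)
    (a y : A) :
    aeval (1 - (1 - a) * (1 - y)) p =
      ∑ k ∈ Finset.range N, aeval a ((1 - X) ^ k * hasseDeriv k p) * y ^ k := by
  rw [show 1 - (1 - a) * (1 - y) = a + (1 - a) * y by ring, aeval_add_eq_sum_hasseDeriv hN]
  refine Finset.sum_congr rfl fun k _ => ?_
  simp only [map_mul, map_pow, map_sub, map_one, aeval_X, mul_pow]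
  ring

end Polynomial

theorem Fin.sum_univ_finset_castSucc {M : Type*} [AddCommMonoid M] (n : ℕ)
    (F : Finset (Fin (n + 1)) → M) :
    ∑ I, F I = ∑ J : Finset (Fin n),
      (F (J.map Fin.castSuccEmb) + F (insert (Fin.last n) (J.map Fin.castSuccEmb))) := by
  have hpow : (Finset.univ.map Fin.castSuccEmb).powerset =
      Finset.univ.map (Finset.mapEmbedding (Fin.castSuccEmb (n := n))).toEmbedding := by
    ext t
    simp [Finset.subset_map_iff, eq_comm]
  rw [← Finset.powerset_univ, Fin.univ_castSuccEmb, Finset.cons_eq_insert,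
    Finset.sum_powerset_insert (by simp), hpow, Finset.sum_map, Finset.sum_map,
    ← Finset.sum_add_distrib]
  rfl

section

variable {R σ : Type*} [CommRing R] {n : ℕ}

open MvPowerSeries Finsupp

theorem coeff_psubst (f : MvPowerSeries σ R) (G : PowerSeries R) (e : σ →₀ ℕ) :
    coeff e (psubst f G) =
      ∑ m ∈ Finset.range (e.degree + 1), PowerSeries.coeff m G * coeff e (f ^ m) :=
  rfl

theorem coeff_psubst_trunc (f : MvPowerSeries σ R) (G : PowerSeries R) {e : σ →₀ ℕ} {N : ℕ}
    (he : e.degree < N) :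
    coeff e (psubst f (trunc N G)) = coeff e (psubst f G) := by
  rw [coeff_psubst, coeff_psubst]
  refine Finset.sum_congr rfl fun m hm => ?_
  rw [coeff_coe_trunc_of_lt (by grind)]

theorem psubst_eq_subst_s9 {f : MvPowerSeries σ R} (hf : constantCoeff f = 0) (G : PowerSeries R) :
    psubst f G = PowerSeries.subst f G := by
  ext e
  rw [coeff_psubst, PowerSeries.coeff_subst (PowerSeries.HasSubst.of_constantCoeff_zero hf),
    finsum_eq_sum_of_support_subset _ (s := Finset.range (e.degree + 1))]
  · simp only [smul_eq_mul]
  · intro m hm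
    rw [Finset.coe_range, Set.mem_Iio, Nat.lt_succ_iff]
    by_contra! h
    refine (Function.mem_support.mp hm) ?_
    rw [coeff_eq_zero_of_constantCoeff_nilpotent (m := 1) (f := f) (d := e) (n := m)
      (by simp [hf]) (by omega), smul_zero]

theorem partialDeriv_coe (m : ℕ) (p : Polynomial R) :
    partialDeriv m (p : PowerSeries R) =
      ∑ I : Finset (Fin m), ((-1 : ℤ) ^ (m + I.card)) •
        Polynomial.aeval (1 - ∏ i ∈ I, (1 - X i) : MvPowerSeries (Fin m) R) p := by
  refine Finset.sum_congr rfl fun I _ => ?_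
  rw [psubst_eq_subst_s9 (by simp), PowerSeries.subst_coe (.of_constantCoeff_zero (by simp))]

theorem coeff_partialDeriv_trunc (m : ℕ) (G : PowerSeries R) {e : Fin m →₀ ℕ} {N : ℕ}
    (he : e.degree < N) :
    coeff e (partialDeriv m (trunc N G)) = coeff e (partialDeriv m G) := by
  simp only [partialDeriv, map_sum, map_zsmul, coeff_psubst_trunc _ _ he]

theorem partialDeriv_smul (m : ℕ) (c : R) (G : PowerSeries R) :
    partialDeriv m (c • G) = c • partialDeriv m G := by
  have psubst_smul (f : MvPowerSeries (Fin m) R) : psubst f (c • G) = c • psubst f G := by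
    ext e
    simp only [coeff_psubst, map_smul, smul_eq_mul, Finset.mul_sum, mul_assoc]
  simp only [partialDeriv, psubst_smul, Finset.smul_sum, smul_comm c]

theorem mapDomain_castSucc_apply_last (d : Fin n →₀ ℕ) :
    mapDomain Fin.castSucc d (Fin.last n) = 0 :=
  mapDomain_of_notMem_range _ _ (by simp [Fin.range_castSucc])

theorem coeff_rename_castSucc_mul_X_last_pow (A : MvPowerSeries (Fin n) R) (d' : Fin n →₀ ℕ)
    (k j : ℕ) :
    coeff (mapDomain Fin.castSucc d' + single (Fin.last n) k)
        (rename Fin.castSucc A * X (Fin.last n) ^ j) = if j = k then coeff d' A else 0 := by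
  rw [MvPowerSeries.X_pow_eq, MvPowerSeries.coeff_mul_monomial, mul_one]
  split_ifs with hle hjk hjk
  · subst hjk
    rw [add_tsub_cancel_right]
    simpa [embDomain_eq_mapDomain] using coeff_embDomain_rename Fin.castSuccEmb A d'
  · refine coeff_rename_eq_zero _ _ ?_
    rintro ⟨x, hx⟩
    have hlast := congrArg (· (Fin.last n)) hx
    have hjk' : j ≤ k := by simpa [mapDomain_castSucc_apply_last] using hle (Fin.last n)
    simp [mapDomain_castSucc_apply_last] at hlast
    omega
  · exact absurd le_add_self (hjk ▸ hle)
  · rfl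

theorem partialDeriv_succ_coe (p : Polynomial R) :
    partialDeriv (n + 1) (p : PowerSeries R) =
      ∑ J : Finset (Fin n), ((-1 : ℤ) ^ (n + J.card)) •
        (Polynomial.aeval (1 - (1 - rename Fin.castSucc (1 - ∏ i ∈ J, (1 - X i))) *
            (1 - X (Fin.last n))) p -
          rename Fin.castSucc (Polynomial.aeval (1 - ∏ i ∈ J, (1 - X i)) p)) := by
  rw [partialDeriv_coe, Fin.sum_univ_finset_castSucc]
  refine Finset.sum_congr rfl fun J _ => ?_
  have hprod : ∏ i ∈ J.map Fin.castSuccEmb, (1 - X i : MvPowerSeries (Fin (n + 1)) R) =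
      rename Fin.castSucc (∏ i ∈ J, (1 - X i)) := by
    simp [Finset.prod_map, map_prod, rename_X]
  have hlast : Fin.last n ∉ J.map Fin.castSuccEmb := by simp [Fin.castSucc_ne_last]
  rw [Finset.prod_insert hlast, Finset.card_insert_of_notMem hlast, Finset.card_map, hprod,
    ← Polynomial.aeval_algHom_apply, map_sub, map_one]
  have hodd : (-1 : ℤ) ^ (n + 1 + J.card) = -(-1) ^ (n + J.card) := by ring
  have heven : (-1 : ℤ) ^ (n + 1 + (J.card + 1)) = (-1) ^ (n + J.card) := by ring
  rw [sub_sub_cancel, mul_comm, hodd, heven, neg_smul, smul_sub]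
  abel

theorem partialDeriv_succ_coe_eq_sum {p : Polynomial R} {N : ℕ} (hN : p.natDegree < N) :
    partialDeriv (n + 1) (p : PowerSeries R) =
      ∑ k ∈ Finset.range N, rename Fin.castSucc (partialDeriv n
          (((1 - Polynomial.X) ^ k * Polynomial.hasseDeriv k p : Polynomial R) : PowerSeries R)) *
          X (Fin.last n) ^ k -
        rename Fin.castSucc (partialDeriv n (p : PowerSeries R)) := by
  simp only [partialDeriv_succ_coe, Polynomial.aeval_one_sub_mul_one_sub_eq_sum_hasseDeriv hN,
    partialDeriv_coe, map_sum, map_zsmul, ← Polynomial.aeval_algHom_apply, smul_sub,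
    Finset.sum_sub_distrib, Finset.sum_mul, smul_mul_assoc, Finset.smul_sum]
  rw [Finset.sum_comm]

theorem coeff_partialDeriv_succ_coe {p : Polynomial R} {N k : ℕ} (hN : p.natDegree < N)
    (hk : k < N) (d' : Fin n →₀ ℕ) :
    coeff (mapDomain Fin.castSucc d' + single (Fin.last n) k)
        (partialDeriv (n + 1) (p : PowerSeries R)) =
      if k = 0 then 0 else coeff d' (partialDeriv n
        (((1 - Polynomial.X) ^ k * Polynomial.hasseDeriv k p : Polynomial R) : PowerSeries R)) := by
  have hrename (A : MvPowerSeries (Fin n) R) :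
      coeff (mapDomain Fin.castSucc d' + single (Fin.last n) k) (rename Fin.castSucc A) =
        if k = 0 then coeff d' A else 0 := by
    simpa [eq_comm] using coeff_rename_castSucc_mul_X_last_pow A d' k 0
  rw [partialDeriv_succ_coe_eq_sum hN, map_sub, map_sum]
  simp only [coeff_rename_castSucc_mul_X_last_pow, hrename]
  rw [Finset.sum_ite_eq', if_pos (Finset.mem_range.mpr hk)]
  split_ifs with hk0
  · subst hk0
    simp
  · rw [sub_zero]

theorem trunc_iterate_derivative (f : PowerSeries R) (m k : ℕ) :
    trunc m ((d⁄dX R)^[k] f) = Polynomial.derivative^[k] (trunc (m + k) f) := by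
  induction k generalizing m with
  | zero => rfl
  | succ k ih =>
    rw [Function.iterate_succ_apply' (d⁄dX R), Function.iterate_succ_apply' Polynomial.derivative,
      trunc_derivative, ih, Nat.add_right_comm, add_assoc]

theorem trunc_one_sub_X_pow_mul_iterate_derivative (f : PowerSeries R) (m k : ℕ) :
    trunc m ((1 - PowerSeries.X) ^ k * (d⁄dX R)^[k] f) =
      trunc m (((1 - Polynomial.X) ^ k * Polynomial.derivative^[k] (trunc (m + k) f) :
        Polynomial R) : PowerSeries R) := by
  rw [← trunc_mul_trunc, trunc_iterate_derivative, Polynomial.coe_mul, Polynomial.coe_pow,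
    Polynomial.coe_sub, Polynomial.coe_one, Polynomial.coe_X]

end

theorem partialDeriv_succ_eq_general (n : ℕ) (G : PowerSeries K)
    (d' : Fin n →₀ ℕ) (k : ℕ) :
    MvPowerSeries.coeff
        (Finsupp.mapDomain (Fin.castSucc) d' + Finsupp.single (Fin.last n) k)
        (partialDeriv (n + 1) G)
      = if k = 0 then 0
        else ((k.factorial : ℚ)⁻¹) •
          MvPowerSeries.coeff d'
            (partialDeriv n ((1 - PowerSeries.X) ^ k * (derivativeFun^[k] G))) := by
  set p := trunc (d'.degree + 1 + k) G
  have hdeg : (Finsupp.mapDomain Fin.castSucc d' + Finsupp.single (Fin.last n) k).degree <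
      d'.degree + 1 + k := by
    rw [map_add, Finsupp.degree_mapDomain, Finsupp.degree_single]
    omega
  have hp : p.natDegree < d'.degree + 1 + k := by
    have := natDegree_trunc_lt G (d'.degree + k)
    rwa [Nat.add_right_comm] at this
  rw [← coeff_partialDeriv_trunc (n + 1) G hdeg, coeff_partialDeriv_succ_coe hp (by omega)]
  split_ifs with hk
  · rfl
  have hfac : ((1 - Polynomial.X) ^ k * Polynomial.derivative^[k] p : Polynomial K) =
      (k.factorial : K) • ((1 - Polynomial.X) ^ k * Polynomial.hasseDeriv k p) := by
    rw [← Polynomial.factorial_smul_hasseDeriv, LinearMap.smul_apply, mul_smul_comm,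
      Nat.cast_smul_eq_nsmul]
  rw [show derivativeFun^[k] G = (d⁄dX K)^[k] G from rfl,
    ← coeff_partialDeriv_trunc n ((1 - X) ^ k * (d⁄dX K)^[k] G) (Nat.lt_succ_self d'.degree),
    trunc_one_sub_X_pow_mul_iterate_derivative, coeff_partialDeriv_trunc n _ (Nat.lt_succ_self _),
    hfac, Polynomial.coe_smul, partialDeriv_smul, map_smul, Nat.cast_smul_eq_nsmul,
    ← Nat.cast_smul_eq_nsmul ℚ, inv_smul_smul₀ (Nat.cast_ne_zero.mpr k.factorial_ne_zero)]

/-- The formula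
`(∂^n G)(x₁,…,x_{n+1}) = ∑_{k≥1} (1/k!) ∂^{n-1}((1-x)^k G^{(k)})(x₁,…,x_n) · x_{n+1}^k`
for `n ≥ 1`, stated coefficientwise: for every multi-exponent `d'` in the first `n`
variables and every exponent `k` of the last variable (only the term of index `k`
contributes, and the terms with `k = 0` vanish). -/
theorem partialDeriv_succ_eq (n : ℕ) (hn : 1 ≤ n) (G : PowerSeries K)
    (d' : Fin n →₀ ℕ) (k : ℕ) :
    MvPowerSeries.coeff
        (Finsupp.mapDomain (Fin.castSucc) d' + Finsupp.single (Fin.last n) k)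
        (partialDeriv (n + 1) G)
      = if k = 0 then 0
        else ((k.factorial : ℚ)⁻¹) •
          MvPowerSeries.coeff d'
            (partialDeriv n ((1 - PowerSeries.X) ^ k * (derivativeFun^[k] G))) :=
  partialDeriv_succ_eq_general n G d' k
end
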